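/- (Hilbert 90 for GL_n) Let L/k be a finite Galois extension with Galois group G acting entrywise on GL_n(L). Then every 1-cocycle ν : G → GL_n(L) is a coboundary: there exists a ∈ GL_n(L) such that ν(σ) = a⁻¹ · σ(a) for all σ ∈ G. Equivalently, H¹(G, GL_n(L)) is trivial. -/

import Mathlib

/-!
The cocycle `ν` turns `L^n` into an `L`-vector space with a semilinear action of `G = Aut(L/k)`,
`σ • v = ν σ * σ(v)`. By Dedekind's independence of characters the averages `∑_σ σ • (x v)`, which
are `G`-fixed, span `L^n`, so `L^n` has a basis of fixed vectors. The matrix `B` with these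
columns is invertible and satisfies `ν σ * σ(B) = B`, i.e. `ν σ = B * σ(B)⁻¹`.
-/

/-- The entrywise action of a Galois automorphism on `GL_n(L)`. -/
def galGL (k L : Type) [Field k] [Field L] [Algebra k L] (n : ℕ) (σ : L ≃ₐ[k] L) :
    GL (Fin n) L →* GL (Fin n) L :=
  Units.map ((RingHom.mapMatrix (σ : L →+* L)).toMonoidHom)

theorem galGL_one (k L : Type) [Field k] [Field L] [Algebra k L] (n : ℕ) :
    galGL k L n 1 = MonoidHom.id _ :=
  rfl

open Matrix

theorem AlgEquiv.eq_zero_of_forall_sum_mul_apply_eq_zero {k L : Type*} [Field k] [Field L]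
    [Algebra k L] [Fintype (L ≃ₐ[k] L)] {c : (L ≃ₐ[k] L) → L} (h : ∀ x, ∑ σ, c σ * σ x = 0)
    (σ : L ≃ₐ[k] L) : c σ = 0 := by
  have hli : LinearIndependent L (fun σ : L ≃ₐ[k] L => (σ : L → L)) :=
    (linearIndependent_monoidHom L L).comp (fun σ : L ≃ₐ[k] L => (σ : L →* L))
      fun _ _ h => AlgEquiv.ext fun x => DFunLike.congr_fun h x
  exact Fintype.linearIndependent_iff.1 hli c (funext fun x => by simpa using h x) σ

theorem exists_isUnit_forall_col_mem_of_span_eq_top {K ι : Type*} [Field K] [Fintype ι]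
    [DecidableEq ι] {W : Set (ι → K)} (hW : Submodule.span K W = ⊤) :
    ∃ B : Matrix ι ι K, IsUnit B ∧ ∀ j, B.col j ∈ W := by
  obtain ⟨s, hsW, hspan, hli⟩ := exists_linearIndependent K W
  let e : s ≃ ι := (Module.Basis.mk hli (by rw [Subtype.range_coe, hspan, hW])).indexEquiv
    (Pi.basisFun K ι)
  refine ⟨Matrix.of fun i j => (e.symm j : ι → K) i, ?_, fun j => hsW (e.symm j).2⟩
  rw [← linearIndependent_cols_iff_isUnit]
  exact hli.comp _ e.symm.injective

section SemilinearAction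

variable {k L V : Type*} [Field k] [Field L] [Algebra k L] [FiniteDimensional k L]
  [AddCommGroup V] [Module L V] (ρ : ∀ σ : L ≃ₐ[k] L, V →ₛₗ[(σ : L →+* L)] V)

theorem sum_apply_mem_setOf_fixed (h_mul : ∀ σ τ v, ρ (σ * τ) v = ρ σ (ρ τ v)) (v : V) :
    ∑ σ, ρ σ v ∈ {w | ∀ τ, ρ τ w = w} := fun τ => by
  simp only [map_sum, ← h_mul]
  exact Equiv.sum_comp (Equiv.mulLeft τ) (ρ · v)

theorem span_setOf_fixed_eq_top (h_one : ∀ v, ρ 1 v = v)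
    (h_mul : ∀ σ τ v, ρ (σ * τ) v = ρ σ (ρ τ v)) :
    Submodule.span L {v | ∀ σ, ρ σ v = v} = ⊤ := by
  by_contra hne
  obtain ⟨f, hf, hker⟩ := (Submodule.span L _).exists_le_ker_of_lt_top (lt_top_iff_ne_top.2 hne)
  refine hf (LinearMap.ext fun v => ?_)
  have hsum (x : L) : ∑ σ, f (ρ σ v) * σ x = 0 := by
    have := hker (Submodule.subset_span (sum_apply_mem_setOf_fixed ρ h_mul (x • v)))
    simp only [LinearMap.mem_ker, map_sum, LinearMap.map_smulₛₗ, smul_eq_mul, RingHom.id_apply,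
      RingHom.coe_coe] at this
    simpa only [mul_comm] using this
  simpa only [h_one, LinearMap.zero_apply] using
    AlgEquiv.eq_zero_of_forall_sum_mul_apply_eq_zero hsum 1

end SemilinearAction

section Cocycle

variable {k L ι : Type*} [Field k] [Field L] [Algebra k L] [Fintype ι]

def twistedMulVec (ν : (L ≃ₐ[k] L) → Matrix ι ι L) (σ : L ≃ₐ[k] L) :
    (ι → L) →ₛₗ[(σ : L →+* L)] (ι → L) where
  toFun v := ν σ *ᵥ (σ ∘ v)
  map_add' v w := by
    rw [← mulVec_add]
    congr 1
    ext
    simp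
  map_smul' c v := by
    rw [← mulVec_smul]
    congr 1
    ext
    simp

theorem twistedMulVec_apply (ν : (L ≃ₐ[k] L) → Matrix ι ι L) (σ : L ≃ₐ[k] L) (v : ι → L) :
    twistedMulVec ν σ v = ν σ *ᵥ (σ ∘ v) := rfl

theorem twistedMulVec_mul {ν : (L ≃ₐ[k] L) → Matrix ι ι L}
    (h_mul : ∀ σ τ, ν (σ * τ) = ν σ * (ν τ).map σ) (σ τ : L ≃ₐ[k] L) (v : ι → L) :
    twistedMulVec ν (σ * τ) v = twistedMulVec ν σ (twistedMulVec ν τ v) := by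
  rw [twistedMulVec_apply, twistedMulVec_apply, twistedMulVec_apply, h_mul, ← mulVec_mulVec]
  congr 1
  funext i
  exact (RingHom.map_mulVec (σ : L →+* L) (ν τ) (τ ∘ v) i).symm

theorem exists_isUnit_mul_map_eq_of_cocycle [DecidableEq ι] [FiniteDimensional k L]
    (ν : (L ≃ₐ[k] L) → Matrix ι ι L) (h_one : ν 1 = 1)
    (h_mul : ∀ σ τ, ν (σ * τ) = ν σ * (ν τ).map σ) :
    ∃ B : Matrix ι ι L, IsUnit B ∧ ∀ σ, ν σ * B.map σ = B := by
  have h_act_one (v : ι → L) : twistedMulVec ν 1 v = v := by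
    rw [twistedMulVec_apply, h_one, one_mulVec]
    rfl
  obtain ⟨B, hB, hcol⟩ := exists_isUnit_forall_col_mem_of_span_eq_top <|
    span_setOf_fixed_eq_top (twistedMulVec ν) h_act_one (twistedMulVec_mul h_mul)
  refine ⟨B, hB, fun σ => ?_⟩
  ext i j
  exact congrFun (hcol j σ) i

end Cocycle

theorem hilbert90_GLn_general
    (k L : Type) [Field k] [Field L] [Algebra k L]
    [FiniteDimensional k L] (n : ℕ)
    (ν : (L ≃ₐ[k] L) → GL (Fin n) L)
    (hν : ∀ σ τ : L ≃ₐ[k] L, ν (σ * τ) = ν σ * galGL k L n σ (ν τ)) :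
    ∃ a : GL (Fin n) L, ∀ σ : L ≃ₐ[k] L, ν σ = a⁻¹ * galGL k L n σ a := by
  have h_one : ν 1 = 1 := by
    have h := hν 1 1
    rwa [one_mul, galGL_one, MonoidHom.id_apply, left_eq_mul] at h
  obtain ⟨B, hB, hfix⟩ :=
    exists_isUnit_mul_map_eq_of_cocycle (fun σ => (ν σ : Matrix (Fin n) (Fin n) L))
      (congrArg Units.val h_one) (fun σ τ => congrArg Units.val (hν σ τ))
  refine ⟨hB.unit⁻¹, fun σ => ?_⟩
  rw [inv_inv, map_inv, eq_mul_inv_iff_mul_eq]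
  exact Units.ext (hfix σ)

/-- Hilbert 90 for `GL_n`: for a finite Galois extension `L/k`, every 1-cocycle
`ν : Gal(L/k) → GL_n(L)` is a coboundary, i.e. `H¹(Gal(L/k), GL_n(L))` is
trivial. -/
theorem hilbert90_GLn
    (k L : Type) [Field k] [Field L] [Algebra k L]
    [IsGalois k L] [FiniteDimensional k L] (n : ℕ)
    (ν : (L ≃ₐ[k] L) → GL (Fin n) L)
    (hν : ∀ σ τ : L ≃ₐ[k] L, ν (σ * τ) = ν σ * galGL k L n σ (ν τ)) :
    ∃ a : GL (Fin n) L, ∀ σ : L ≃ₐ[k] L, ν σ = a⁻¹ * galGL k L n σ a :=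
  hilbert90_GLn_general k L n ν hν
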